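/- arXiv:1304.2801 — 5 statements merged into one kernel-verified Lean document; each statement's English description precedes it below -/
import Mathlib

section
/- Let g be a semisimple Lie algebra over ℝ or ℂ with Killing form β. Define the operator Λ sending a symmetric bilinear form σ to the 4-linear form (Λσ)(x,y,z,z') = σ([x,y],[z,z']) + σ([y,z],[x,z']) + σ([z,x],[y,z']). Then Λσ is an alternating (fully skew-symmetric) 4-linear form on g for every symmetric bilinear form σ. -/
/-- For a Lie algebra `g` over `ℝ` or `ℂ` and any symmetric bilinear form
`σ`, the 4-linear form `(Λσ)(x,y,z,z') = σ([x,y],[z,z']) + σ([y,z],[x,z']) + σ([z,x],[y,z'])`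
is alternating: it changes sign under transposition of any two adjacent arguments. -/
theorem lambda_of_symmetric_is_alternating
    {𝕜 : Type*} [RCLike 𝕜] {L : Type*} [LieRing L] [LieAlgebra 𝕜 L]
    (σ : L →ₗ[𝕜] L →ₗ[𝕜] 𝕜) (hσ : ∀ x y : L, σ x y = σ y x) :
    ∀ x y z w : L,
      (σ ⁅x, y⁆ ⁅z, w⁆ + σ ⁅y, z⁆ ⁅x, w⁆ + σ ⁅z, x⁆ ⁅y, w⁆
        = -(σ ⁅y, x⁆ ⁅z, w⁆ + σ ⁅x, z⁆ ⁅y, w⁆ + σ ⁅z, y⁆ ⁅x, w⁆)) ∧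
      (σ ⁅x, y⁆ ⁅z, w⁆ + σ ⁅y, z⁆ ⁅x, w⁆ + σ ⁅z, x⁆ ⁅y, w⁆
        = -(σ ⁅x, z⁆ ⁅y, w⁆ + σ ⁅z, y⁆ ⁅x, w⁆ + σ ⁅y, x⁆ ⁅z, w⁆)) ∧
      (σ ⁅x, y⁆ ⁅z, w⁆ + σ ⁅y, z⁆ ⁅x, w⁆ + σ ⁅z, x⁆ ⁅y, w⁆
        = -(σ ⁅x, y⁆ ⁅w, z⁆ + σ ⁅y, w⁆ ⁅x, z⁆ + σ ⁅w, x⁆ ⁅y, z⁆)) := by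
  intro x y z w
  have key : ∀ a b c d : L, σ ⁅a, b⁆ ⁅c, d⁆ = -σ ⁅b, a⁆ ⁅c, d⁆ := by
    intro a b c d
    rw [← lie_skew a b, map_neg, LinearMap.neg_apply]
  have key2 : ∀ a b c d : L, σ ⁅a, b⁆ ⁅c, d⁆ = -σ ⁅a, b⁆ ⁅d, c⁆ := by
    intro a b c d
    rw [← lie_skew c d, map_neg]
  refine ⟨?_, ?_, ?_⟩
  · rw [key y x z w, key x z y w, key z y x w]; ring
  · rw [key x z y w, key z y x w, key y x z w]; ring
  · rw [key2 x y w z, hσ ⁅y, w⁆ ⁅x, z⁆, key x z y w, hσ ⁅w, x⁆ ⁅y, z⁆, key2 y z x w]; ring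
end

section
/- Let g be a semisimple Lie algebra over ℝ or ℂ with Killing form β. Let Ω, Λ, Π be the operators defined respectively by: (Ωσ)(x,y) = 2 tr((ad x)(ad y)Σ) where σ = β(Σ·,·); (Λσ)(x,y,z,z') = σ([x,y],[z,z']) + σ([y,z],[x,z']) + σ([z,x],[y,z']); and Π : tensors of rank 4 → tensors of rank 2 given on decomposables ξ⊗ξ'⊗η⊗η' (with ξ = β(x,·), etc.) by β([x,x'],·)⊗β([y,y'],·). Then on symmetric bilinear forms, 2·ΠΛ = −(Ω + Id)(Ω − 2·Id). -/
/-!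
Let `b'` be the Killing-dual basis of `b`. Because the form is the Killing form, the Casimir
operator `∑ ad b'ᵢ ∘ ad bᵢ` is the identity, and since the Casimir tensor `∑ bᵢ ⊗ b'ᵢ` is
symmetric, applying `ad` to `∑ [b'ᵢ, [bᵢ, x]] = x` gives `2 ∑ ad b'ᵢ ∘ X ∘ ad bᵢ = X` for
`X = ad x`. Contracting with the dual basis, the first term of `Λσ` yields `σ(u, v)` and the
other two both yield `Z = ∑ⱼₖ σ([bⱼ, bₖ], [[b'ⱼ, u], [v, b'ₖ]])`. With these two identities,
`2Z` and `tr(ad u ∘ ad v ∘ Σ')` both become combinations of `tr(ad u ∘ ad v ∘ Σ)`,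
`tr(ad v ∘ ad u ∘ Σ)` and `tr(ad v ∘ ad u ∘ ∑ ad bᵢ ∘ Σ ∘ ad b'ᵢ)`; computing `Z` this way uses
`σ(x, y) = β(x, Σ y)`, which is where the symmetry of `σ` enters.
-/

open LinearMap (trace)

namespace LinearMap.BilinForm

variable {R M N ι : Type*} [CommRing R] [AddCommGroup M] [Module R M] [AddCommGroup N]
  [Module R N] [Fintype ι] [DecidableEq ι]
  {B : LinearMap.BilinForm R M} {b : Module.Basis ι R M} {b' : ι → M}
  (hdual : ∀ i j, B (b i) (b' j) = if i = j then 1 else 0)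
include hdual

theorem basis_repr_eq_apply_dual (x : M) (i : ι) : b.repr x i = B x (b' i) := by
  conv_rhs => rw [← b.sum_repr x]
  simp [hdual, -Module.Basis.sum_repr]

theorem sum_apply_dual_smul (x : M) : ∑ i, B x (b' i) • b i = x := by
  simpa only [← basis_repr_eq_apply_dual hdual] using b.sum_repr x

theorem trace_eq_sum_apply_dual (f : Module.End R M) : trace R M f = ∑ i, B (f (b i)) (b' i) := by
  simp [LinearMap.trace_eq_matrix_trace R b, Matrix.trace, LinearMap.toMatrix_apply,
    basis_repr_eq_apply_dual hdual]

theorem sum_apply_basis_dual_comm (hB : IsSymm B) (F : M →ₗ[R] M →ₗ[R] N) :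
    ∑ i, F (b i) (b' i) = ∑ i, F (b' i) (b i) := by
  have expand (i : ι) (f : M →ₗ[R] N) : f (b' i) = ∑ j, B (b' i) (b' j) • f (b j) := by
    conv_lhs => rw [← sum_apply_dual_smul hdual (b' i)]
    simp only [map_sum, map_smul]
  calc ∑ i, F (b i) (b' i) = ∑ i, ∑ j, B (b' i) (b' j) • F (b i) (b j) := by
        simp only [expand _ (F (b _))]
    _ = ∑ j, ∑ i, B (b' j) (b' i) • F.flip (b j) (b i) := by
        rw [Finset.sum_comm]
        exact Finset.sum_congr rfl fun j _ => Finset.sum_congr rfl fun i _ => by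
          rw [hB.eq]; rfl
    _ = ∑ i, F (b' i) (b i) :=
        Finset.sum_congr rfl fun j _ => (expand j (F.flip (b j))).symm

theorem trace_eq_sum_apply_apply_dual (hB : IsSymm B) (f : Module.End R M) :
    trace R M f = ∑ i, B (b i) (f (b' i)) := by
  rw [trace_eq_sum_apply_dual hdual]
  exact (sum_apply_basis_dual_comm hdual hB (B.compl₁₂ f .id)).trans
    (Finset.sum_congr rfl fun i _ => hB.eq _ _)

theorem ext_of_dual {x y : M} (h : ∀ z, B x z = B y z) : x = y :=
  b.ext_elem fun i => by
    rw [basis_repr_eq_apply_dual hdual, basis_repr_eq_apply_dual hdual, h]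

end LinearMap.BilinForm

namespace LieAlgebra

open LinearMap.BilinForm

variable {K L ι : Type*} [CommRing K] [LieRing L] [LieAlgebra K L] [Fintype ι] [DecidableEq ι]
  {b : Module.Basis ι K L} {b' : ι → L}

local notation "β" => killingForm K L

theorem ad_lie_eq_mul_sub_mul (x y : L) :
    ad K L ⁅x, y⁆ = ad K L x * ad K L y - ad K L y * ad K L x := by
  ext z
  simp

variable (b b') in
/-- The operator `Π` of the paper, written in the basis `b` and its Killing-dual `b'`. -/
noncomputable def piContraction (ζ : L → L → L → L → K) (u v : L) : K :=
  ∑ i, ∑ j, ∑ k, ∑ l, ζ (b i) (b j) (b k) (b l) * β ⁅b' i, b' j⁆ u * β ⁅b' k, b' l⁆ v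

variable (hdual : ∀ i j, killingForm K L (b i) (b' j) = if i = j then 1 else 0)
include hdual

theorem sum_lie_dual_lie (y : L) :
    ∑ i, ⁅b' i, ⁅b i, y⁆⁆ = y := by
  refine ext_of_dual hdual fun z => ?_
  have key (i : ι) : β ⁅b' i, ⁅b i, y⁆⁆ z = β (b i) ((ad K L y ∘ₗ ad K L z) (b' i)) := by
    rw [LieModule.traceForm_apply_lie_apply', ← lie_skew (b' i) z, map_neg, neg_neg,
      LieModule.traceForm_apply_lie_apply]
    rfl
  rw [map_sum, LinearMap.sum_apply, Finset.sum_congr rfl fun i _ => key i,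
    ← trace_eq_sum_apply_apply_dual hdual ⟨LieModule.traceForm_comm K L L⟩,
    killingForm_apply_apply]

theorem sum_ad_dual_mul_ad : ∑ i, ad K L (b' i) * ad K L (b i) = 1 := by
  ext y
  simpa using sum_lie_dual_lie hdual y

theorem sum_ad_mul_ad_dual : ∑ i, ad K L (b i) * ad K L (b' i) = 1 := by
  rw [← sum_ad_dual_mul_ad hdual]
  exact sum_apply_basis_dual_comm hdual ⟨LieModule.traceForm_comm K L L⟩
    ((LinearMap.mul K (Module.End K L)).compl₁₂ (ad K L : L →ₗ[K] Module.End K L) (ad K L))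

theorem two_nsmul_sum_ad_dual_mul_ad_mul_ad (x : L) :
    2 • ∑ i, ad K L (b' i) * ad K L x * ad K L (b i) = ad K L x := by
  have hsymm : ∑ i, ad K L (b i) * ad K L x * ad K L (b' i)
      = ∑ i, ad K L (b' i) * ad K L x * ad K L (b i) :=
    sum_apply_basis_dual_comm hdual ⟨LieModule.traceForm_comm K L L⟩
      ((LinearMap.mul K (Module.End K L)).compl₁₂
        (LinearMap.mulRight K (ad K L x) ∘ₗ (ad K L : L →ₗ[K] Module.End K L)) (ad K L))
  have hcas : ∑ i, ad K L ⁅b' i, ⁅b i, x⁆⁆ = ad K L x := by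
    rw [← map_sum, sum_lie_dual_lie hdual]
  have hexpand (i : ι) : ad K L ⁅b' i, ⁅b i, x⁆⁆ = ad K L (b' i) * ad K L (b i) * ad K L x
      - ad K L (b' i) * ad K L x * ad K L (b i) - ad K L (b i) * ad K L x * ad K L (b' i)
      + ad K L x * (ad K L (b i) * ad K L (b' i)) := by
    simp only [ad_lie_eq_mul_sub_mul]
    noncomm_ring
  simp only [hexpand, Finset.sum_add_distrib, Finset.sum_sub_distrib, ← Finset.sum_mul,
    ← Finset.mul_sum, sum_ad_dual_mul_ad hdual, sum_ad_mul_ad_dual hdual, hsymm] at hcas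
  rw [one_mul, mul_one] at hcas
  linear_combination (norm := abel) -hcas

theorem sum_lie_lie_dual (y : L) : ∑ i, ⁅b i, ⁅b' i, y⁆⁆ = y := by
  simpa using LinearMap.congr_fun (sum_ad_mul_ad_dual hdual) y

theorem sum_killing_lie_dual_smul (y u : L) : ∑ j, β ⁅y, b' j⁆ u • b j = ⁅u, y⁆ := by
  have h (j : ι) : β ⁅y, b' j⁆ u = β ⁅u, y⁆ (b' j) := by
    rw [LieModule.traceForm_apply_lie_apply', ← lie_skew, map_neg, neg_neg,
      LieModule.traceForm_comm]
  simp only [h, sum_apply_dual_smul hdual]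

theorem sum_killing_dual_lie_smul (y u : L) : ∑ i, β ⁅b' i, y⁆ u • b i = ⁅y, u⁆ := by
  have h (i : ι) : β ⁅b' i, y⁆ u = β ⁅y, u⁆ (b' i) := by
    rw [LieModule.traceForm_apply_lie_apply, LieModule.traceForm_comm]
  simp only [h, sum_apply_dual_smul hdual]

theorem piContraction_lie_lie (σ : L →ₗ[K] L →ₗ[K] K) (u v : L) :
    piContraction b b' (fun x y z w => σ ⁅x, y⁆ ⁅z, w⁆) u v = σ u v := by
  have h (u : L) : ∑ i, ∑ j, β ⁅b' i, b' j⁆ u • ⁅b i, b j⁆ = -u := by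
    simp only [← lie_smul, ← lie_sum, sum_killing_lie_dual_smul hdual, ← lie_skew u (b' _),
      lie_neg, Finset.sum_neg_distrib, sum_lie_lie_dual hdual]
  calc piContraction b b' (fun x y z w => σ ⁅x, y⁆ ⁅z, w⁆) u v
      = ∑ i, ∑ j, σ ⁅b i, b j⁆ (-v) * β ⁅b' i, b' j⁆ u := by
        refine Finset.sum_congr rfl fun i _ => Finset.sum_congr rfl fun j _ => ?_
        simp only [← h v, map_sum, map_smul, smul_eq_mul, Finset.sum_mul]
        exact Finset.sum_congr rfl fun k _ => Finset.sum_congr rfl fun l _ => by ring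
    _ = σ u v := by
        rw [show σ u v = σ (-u) (-v) by simp, ← h u]
        simp only [map_sum, map_smul, LinearMap.sum_apply, LinearMap.smul_apply, smul_eq_mul,
          mul_comm]

theorem piContraction_lie_lie_mid (σ : L →ₗ[K] L →ₗ[K] K) (u v : L) :
    piContraction b b' (fun x y z w => σ ⁅y, z⁆ ⁅x, w⁆) u v
      = ∑ j, ∑ k, σ ⁅b j, b k⁆ ⁅⁅b' j, u⁆, ⁅v, b' k⁆⁆ := by
  calc piContraction b b' (fun x y z w => σ ⁅y, z⁆ ⁅x, w⁆) u v
      = ∑ j, ∑ k, ∑ i, ∑ l,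
          σ ⁅b j, b k⁆ ⁅b i, b l⁆ * β ⁅b' i, b' j⁆ u * β ⁅b' k, b' l⁆ v := by
        rw [piContraction, Finset.sum_comm]
        exact Finset.sum_congr rfl fun j _ => Finset.sum_comm
    _ = _ := by
        simp only [← sum_killing_dual_lie_smul hdual (b' _) u, sum_lie, smul_lie, map_sum,
          map_smul, smul_eq_mul]
        simp only [← sum_killing_lie_dual_smul hdual (b' _) v, lie_sum, lie_smul, map_sum,
          map_smul, smul_eq_mul, Finset.mul_sum]
        simp only [mul_comm, mul_left_comm]

theorem piContraction_lie_lie_cyc (σ : L →ₗ[K] L →ₗ[K] K) (u v : L) :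
    piContraction b b' (fun x y z w => σ ⁅z, x⁆ ⁅y, w⁆) u v
      = ∑ j, ∑ k, σ ⁅b j, b k⁆ ⁅⁅b' j, u⁆, ⁅v, b' k⁆⁆ := by
  calc piContraction b b' (fun x y z w => σ ⁅z, x⁆ ⁅y, w⁆) u v
      = ∑ i, ∑ k, ∑ j, ∑ l,
          σ ⁅b k, b i⁆ ⁅b j, b l⁆ * β ⁅b' i, b' j⁆ u * β ⁅b' k, b' l⁆ v :=
        Finset.sum_congr rfl fun i _ => Finset.sum_comm
    _ = ∑ i, ∑ k, σ ⁅b k, b i⁆ ⁅⁅u, b' i⁆, ⁅v, b' k⁆⁆ := by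
        simp only [← sum_killing_lie_dual_smul hdual (b' _) u, sum_lie, smul_lie, map_sum,
          map_smul, smul_eq_mul]
        simp only [← sum_killing_lie_dual_smul hdual (b' _) v, lie_sum, lie_smul, map_sum,
          map_smul, smul_eq_mul, Finset.mul_sum]
        simp only [mul_comm, mul_left_comm]
    _ = _ := by
        refine Finset.sum_congr rfl fun j _ => Finset.sum_congr rfl fun k _ => ?_
        rw [← lie_skew (b k) (b j), ← lie_skew (b' j) u]
        simp only [neg_lie, map_neg, LinearMap.neg_apply]

theorem two_mul_trace_sum_ad_dual_mul_ad_mul_ad_mul (x : L) (C : Module.End K L) :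
    2 * trace K L ((∑ i, ad K L (b' i) * ad K L x * ad K L (b i)) * C)
      = trace K L (ad K L x * C) := by
  conv_rhs => rw [← two_nsmul_sum_ad_dual_mul_ad_mul_ad hdual x]
  rw [smul_mul_assoc, map_nsmul, nsmul_eq_mul, Nat.cast_ofNat]

theorem two_mul_sum_lie_lie_eq_trace (σ : L →ₗ[K] L →ₗ[K] K) (hσ : ∀ x y, σ x y = σ y x)
    (S : Module.End K L) (hS : ∀ x y, β (S x) y = σ x y) (u v : L) :
    2 * ∑ j, ∑ k, σ ⁅b j, b k⁆ ⁅⁅b' j, u⁆, ⁅v, b' k⁆⁆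
      = trace K L (ad K L v * ad K L u * S)
        - 2 * trace K L (ad K L v * ad K L u * ∑ k, ad K L (b k) * S * ad K L (b' k)) := by
  have hσS (x y : L) : σ x y = β x (S y) := by rw [hσ, ← hS, LieModule.traceForm_comm]
  have hk (k : ι) : ∑ j, σ ⁅b j, b k⁆ ⁅⁅b' j, u⁆, ⁅v, b' k⁆⁆
      = trace K L (ad K L (b k) * S * ad K L ⁅v, b' k⁆ * ad K L u) := by
    have hj (j : ι) : σ ⁅b j, b k⁆ ⁅⁅b' j, u⁆, ⁅v, b' k⁆⁆
        = β (b j) ((ad K L (b k) * S * ad K L ⁅v, b' k⁆ * ad K L u) (b' j)) := by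
      have hW : ⁅⁅b' j, u⁆, ⁅v, b' k⁆⁆ = ⁅⁅v, b' k⁆, ⁅u, b' j⁆⁆ := by
        rw [← lie_skew ⁅b' j, u⁆, ← lie_skew (b' j) u, lie_neg, neg_neg]
      rw [hσS, hW, LieModule.traceForm_apply_lie_apply]
      rfl
    rw [Finset.sum_congr rfl fun j _ => hj j,
      ← trace_eq_sum_apply_apply_dual hdual ⟨LieModule.traceForm_comm K L L⟩]
  have hcyc (k : ι) : trace K L (ad K L (b k) * S * ad K L ⁅v, b' k⁆ * ad K L u)
      = trace K L ((ad K L (b' k) * ad K L u * ad K L (b k)) * (S * ad K L v))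
        - trace K L (ad K L v * ad K L u * (ad K L (b k) * S * ad K L (b' k))) := by
    rw [ad_lie_eq_mul_sub_mul, mul_sub, sub_mul, map_sub]
    congr 1
    · rw [show ad K L (b k) * S * (ad K L v * ad K L (b' k)) * ad K L u
          = ad K L (b k) * (S * ad K L v) * (ad K L (b' k) * ad K L u) by
            simp only [mul_assoc],
        LinearMap.trace_mul_comm]
      simp only [mul_assoc]
    · rw [show ad K L (b k) * S * (ad K L (b' k) * ad K L v) * ad K L u
          = ad K L (b k) * S * ad K L (b' k) * (ad K L v * ad K L u) by
            simp only [mul_assoc],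
        LinearMap.trace_mul_comm]
  rw [Finset.sum_comm, Finset.sum_congr rfl fun k _ => (hk k).trans (hcyc k),
    Finset.sum_sub_distrib, ← map_sum, ← map_sum, ← Finset.sum_mul, ← Finset.mul_sum, mul_sub,
    two_mul_trace_sum_ad_dual_mul_ad_mul_ad_mul hdual, LinearMap.trace_mul_cycle']
  simp only [mul_assoc]

theorem trace_ad_mul_ad_mul_eq (S S' : Module.End K L)
    (hS' : ∀ x y, β (S' x) y = 2 * trace K L (ad K L x ∘ₗ ad K L y ∘ₗ S)) (u v : L) :
    trace K L (ad K L u * ad K L v * S')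
      = trace K L (ad K L u * ad K L v * S) - trace K L (ad K L v * ad K L u * S)
        + 2 * trace K L (ad K L v * ad K L u * ∑ i, ad K L (b i) * S * ad K L (b' i)) := by
  have hi (i : ι) : β (b i) ((S' * (ad K L u * ad K L v)) (b' i))
      = 2 * trace K L (ad K L ⁅u, ⁅v, b' i⁆⁆ * ad K L (b i) * S) := by
    rw [LieModule.traceForm_comm, Module.End.mul_apply, hS']
    rfl
  have hexp (i : ι) : trace K L (ad K L ⁅u, ⁅v, b' i⁆⁆ * ad K L (b i) * S)
      = trace K L (ad K L (b' i) * ad K L (b i) * (S * ad K L u * ad K L v))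
        - trace K L (ad K L (b' i) * ad K L v * ad K L (b i) * (S * ad K L u))
        - trace K L (ad K L (b' i) * ad K L u * ad K L (b i) * (S * ad K L v))
        + trace K L (ad K L v * ad K L u * (ad K L (b i) * S * ad K L (b' i))) := by
    have : ad K L ⁅u, ⁅v, b' i⁆⁆ * ad K L (b i) * S
        = ad K L u * ad K L v * (ad K L (b' i) * ad K L (b i) * S)
          - ad K L u * (ad K L (b' i) * ad K L v * ad K L (b i) * S)
          - ad K L v * (ad K L (b' i) * ad K L u * ad K L (b i) * S)
          + ad K L (b' i) * (ad K L v * ad K L u * ad K L (b i) * S) := by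
      simp only [ad_lie_eq_mul_sub_mul]
      noncomm_ring
    rw [this, map_add, map_sub, map_sub, LinearMap.trace_mul_comm K (ad K L u * ad K L v),
      LinearMap.trace_mul_comm K (ad K L u), LinearMap.trace_mul_comm K (ad K L v),
      LinearMap.trace_mul_comm K (ad K L (b' i))]
    simp only [mul_assoc]
  rw [LinearMap.trace_mul_comm,
    trace_eq_sum_apply_apply_dual hdual ⟨LieModule.traceForm_comm K L L⟩]
  simp only [hi, hexp, mul_add, mul_sub, Finset.sum_add_distrib, Finset.sum_sub_distrib,
    ← Finset.mul_sum, ← map_sum, ← Finset.sum_mul, sum_ad_dual_mul_ad hdual,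
    two_mul_trace_sum_ad_dual_mul_ad_mul_ad_mul hdual]
  have h₁ : trace K L (S * ad K L u * ad K L v) = trace K L (ad K L u * ad K L v * S) := by
    rw [mul_assoc, LinearMap.trace_mul_comm]
  have h₂ : trace K L (ad K L v * (S * ad K L u)) = trace K L (ad K L u * ad K L v * S) := by
    rw [LinearMap.trace_mul_comm, h₁]
  have h₃ : trace K L (ad K L u * (S * ad K L v)) = trace K L (ad K L v * ad K L u * S) := by
    rw [LinearMap.trace_mul_comm, mul_assoc, LinearMap.trace_mul_comm]
  rw [one_mul, h₁, h₂, h₃]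
  ring

end LieAlgebra

theorem two_pi_lambda_eq_neg_omega_poly_general
    {𝕜 : Type*} [RCLike 𝕜] {L : Type*} [LieRing L] [LieAlgebra 𝕜 L]
    {ι : Type*} [Fintype ι] [DecidableEq ι] (b : Module.Basis ι 𝕜 L) (b' : ι → L)
    (hdual : ∀ i j, killingForm 𝕜 L (b i) (b' j) = if i = j then 1 else 0)
    (σ : L →ₗ[𝕜] L →ₗ[𝕜] 𝕜) (hσ : ∀ x y, σ x y = σ y x)
    (S : L →ₗ[𝕜] L) (hS : ∀ x y : L, killingForm 𝕜 L (S x) y = σ x y)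
    (S' : L →ₗ[𝕜] L)
    (hS' : ∀ x y : L, killingForm 𝕜 L (S' x) y =
      2 * LinearMap.trace 𝕜 L ((LieAlgebra.ad 𝕜 L x) ∘ₗ (LieAlgebra.ad 𝕜 L y) ∘ₗ S)) :
    ∀ u v : L,
      2 * ∑ i, ∑ j, ∑ k, ∑ l,
        (σ ⁅b i, b j⁆ ⁅b k, b l⁆ + σ ⁅b j, b k⁆ ⁅b i, b l⁆ + σ ⁅b k, b i⁆ ⁅b j, b l⁆) *
          killingForm 𝕜 L ⁅b' i, b' j⁆ u * killingForm 𝕜 L ⁅b' k, b' l⁆ v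
      = -((2 * LinearMap.trace 𝕜 L
              ((LieAlgebra.ad 𝕜 L u) ∘ₗ (LieAlgebra.ad 𝕜 L v) ∘ₗ S'))
          - (2 * LinearMap.trace 𝕜 L
              ((LieAlgebra.ad 𝕜 L u) ∘ₗ (LieAlgebra.ad 𝕜 L v) ∘ₗ S))
          - 2 * σ u v) := by
  intro u v
  have hsplit : ∑ i, ∑ j, ∑ k, ∑ l,
      (σ ⁅b i, b j⁆ ⁅b k, b l⁆ + σ ⁅b j, b k⁆ ⁅b i, b l⁆ + σ ⁅b k, b i⁆ ⁅b j, b l⁆) *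
        killingForm 𝕜 L ⁅b' i, b' j⁆ u * killingForm 𝕜 L ⁅b' k, b' l⁆ v
      = LieAlgebra.piContraction b b' (fun x y z w => σ ⁅x, y⁆ ⁅z, w⁆) u v
        + LieAlgebra.piContraction b b' (fun x y z w => σ ⁅y, z⁆ ⁅x, w⁆) u v
        + LieAlgebra.piContraction b b' (fun x y z w => σ ⁅z, x⁆ ⁅y, w⁆) u v := by
    simp only [LieAlgebra.piContraction, add_mul, Finset.sum_add_distrib]
  rw [hsplit, LieAlgebra.piContraction_lie_lie hdual, LieAlgebra.piContraction_lie_lie_mid hdual,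
    LieAlgebra.piContraction_lie_lie_cyc hdual]
  simp only [← Module.End.mul_eq_comp, ← mul_assoc]
  linear_combination 2 * LieAlgebra.two_mul_sum_lie_lie_eq_trace hdual σ hσ S hS u v
    + 2 * LieAlgebra.trace_ad_mul_ad_mul_eq hdual S S' hS' u v

/-- Theorem A: In a semisimple Lie algebra `g` over `ℝ` or `ℂ`,
`2·ΠΛ = −(Ω + Id)(Ω − 2·Id)` on symmetric bilinear forms.  Here, for a basis `b` with
`β`-dual basis `b'`, `Π` of a 4-form `ζ` is
`(Πζ)(u,v) = ∑ ζ(b i, b j, b k, b l)·β([b' i, b' j], u)·β([b' k, b' l], v)`,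
`Λσ` is as in (1.4), `Σ` realizes `σ` via `β`, and `Σ'` realizes `Ωσ`. -/
theorem two_pi_lambda_eq_neg_omega_poly
    {𝕜 : Type*} [RCLike 𝕜] {L : Type*} [LieRing L] [LieAlgebra 𝕜 L]
    [Module.Finite 𝕜 L] [LieAlgebra.IsSemisimple 𝕜 L]
    {ι : Type*} [Fintype ι] [DecidableEq ι] (b : Module.Basis ι 𝕜 L) (b' : ι → L)
    (hdual : ∀ i j, killingForm 𝕜 L (b i) (b' j) = if i = j then 1 else 0)
    (σ : L →ₗ[𝕜] L →ₗ[𝕜] 𝕜) (hσ : ∀ x y, σ x y = σ y x)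
    (S : L →ₗ[𝕜] L) (hS : ∀ x y : L, killingForm 𝕜 L (S x) y = σ x y)
    (S' : L →ₗ[𝕜] L)
    (hS' : ∀ x y : L, killingForm 𝕜 L (S' x) y =
      2 * LinearMap.trace 𝕜 L ((LieAlgebra.ad 𝕜 L x) ∘ₗ (LieAlgebra.ad 𝕜 L y) ∘ₗ S)) :
    ∀ u v : L,
      2 * ∑ i, ∑ j, ∑ k, ∑ l,
        (σ ⁅b i, b j⁆ ⁅b k, b l⁆ + σ ⁅b j, b k⁆ ⁅b i, b l⁆ + σ ⁅b k, b i⁆ ⁅b j, b l⁆) *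
          killingForm 𝕜 L ⁅b' i, b' j⁆ u * killingForm 𝕜 L ⁅b' k, b' l⁆ v
      = -((2 * LinearMap.trace 𝕜 L
              ((LieAlgebra.ad 𝕜 L u) ∘ₗ (LieAlgebra.ad 𝕜 L v) ∘ₗ S'))
          - (2 * LinearMap.trace 𝕜 L
              ((LieAlgebra.ad 𝕜 L u) ∘ₗ (LieAlgebra.ad 𝕜 L v) ∘ₗ S))
          - 2 * σ u v) :=
  two_pi_lambda_eq_neg_omega_poly_general b b' hdual σ hσ S hS S' hS'
end

section
/- Let g = g₁ ⊕ ... ⊕ g_s be a direct sum decomposition of a semisimple Lie algebra over ℝ or ℂ into simple ideals, and let Λ be the operator (Λσ)(x,y,z,z') = σ([x,y],[z,z']) + σ([y,z],[x,z']) + σ([z,x],[y,z']) on symmetric bilinear forms. If σ is a symmetric bilinear form on g with Λσ = 0, then σ(g_i, g_j) = 0 for i ≠ j; consequently Ker Λ is the direct sum of the kernels of the analogous operators Λ_i on the summands g_i (extended trivially). -/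
/-!
Brackets between distinct simple ideals vanish, and a simple ideal is perfect: `gᵢ = [gᵢ, gᵢ]`.
If `Λσ = 0`, evaluating it at `(a, b, c, d)` with `a, b ∈ gᵢ`, `c ∈ gⱼ` kills the last two
terms, so `σ([a, b], [c, d]) = 0`; perfectness of `gᵢ` and `gⱼ` then gives `σ(gᵢ, gⱼ) = 0`.
Conversely `Λσ` is 4-linear, so it suffices to evaluate it on elements of the summands, and there
`σ([a, b], [c, d])` vanishes unless all four arguments lie in the same summand.
-/

namespace LieAlgebra

variable {R L : Type*} [CommRing R] [LieRing L] [LieAlgebra R L]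

theorem IsSimple.derivedSeries_one_eq_top [IsSimple R L] : derivedSeries R L 1 = ⊤ := by
  refine (IsSimple.eq_bot_or_eq_top _).resolve_left fun h => IsSimple.non_abelian R (L := L) ?_
  have : IsLieAbelian (⊤ : LieIdeal R L) := (abelian_iff_derived_one_eq_bot _).mpr h
  exact (lie_abelian_iff_equiv_lie_abelian LieIdeal.topEquiv).mp this

end LieAlgebra

namespace LieIdeal

variable {R L M : Type*} [CommRing R] [LieRing L] [LieAlgebra R L] [AddCommGroup M] [Module R M]

theorem lie_self_eq_of_isSimple (I : LieIdeal R L) [LieAlgebra.IsSimple R I] : ⁅I, I⁆ = I := by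
  have h := derivedSeries_eq_derivedSeriesOfIdeal_map (R := R) I 1
  rw [LieAlgebra.IsSimple.derivedSeries_one_eq_top, ← LieHom.idealRange_eq_map,
    incl_idealRange] at h
  simpa [LieAlgebra.derivedSeriesOfIdeal_succ] using h.symm

theorem lie_eq_zero_of_disjoint {I J : LieIdeal R L} (h : Disjoint I J) {x y : L} (hx : x ∈ I)
    (hy : y ∈ J) : ⁅x, y⁆ = 0 := by
  have hIJ : ⁅I, J⁆ = ⊥ := le_bot_iff.mp ((LieSubmodule.lie_le_inf I J).trans h.le_bot)
  exact (LieSubmodule.lie_eq_bot_iff J I).mp hIJ x hx y hy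

theorem map_eq_zero_of_lie_self_eq {I : LieIdeal R L} (hI : ⁅I, I⁆ = I) (f : L →ₗ[R] M)
    (hf : ∀ a ∈ I, ∀ b ∈ I, f ⁅a, b⁆ = 0) {x : L} (hx : x ∈ I) : f x = 0 := by
  rw [← hI, ← LieSubmodule.mem_toSubmodule, LieSubmodule.lieIdeal_oper_eq_linear_span'] at hx
  refine (Submodule.span_le (p := LinearMap.ker f)).mpr ?_ hx
  rintro _ ⟨a, ha, b, hb, rfl⟩
  exact hf a ha b hb

end LieIdeal

theorem LinearMap.eq_zero_of_iSup_eq_top {R N P ι : Type*} [Semiring R] [AddCommMonoid N]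
    [Module R N] [AddCommMonoid P] [Module R P] {p : ι → Submodule R N} (hp : ⨆ i, p i = ⊤)
    {f : N →ₗ[R] P} (hf : ∀ i, ∀ x ∈ p i, f x = 0) : f = 0 :=
  LinearMap.ker_eq_top.mp (eq_top_iff.mpr (hp ▸ iSup_le fun i x hx => hf i x hx))

namespace LieAlgebra

variable {R L M : Type*} [CommRing R] [LieRing L] [LieAlgebra R L] [AddCommGroup M] [Module R M]

/-- The paper's `Λσ`. -/
def lambdaForm (σ : L →ₗ[R] L →ₗ[R] M) : L →ₗ[R] L →ₗ[R] L →ₗ[R] L →ₗ[R] M :=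
  LinearMap.mk₂ R
    (fun x y => LinearMap.mk₂ R
      (fun z w => σ ⁅x, y⁆ ⁅z, w⁆ + σ ⁅y, z⁆ ⁅x, w⁆ + σ ⁅z, x⁆ ⁅y, w⁆)
      (by intros; simp only [lie_add, add_lie, map_add, LinearMap.add_apply]; abel)
      (by intros; simp only [lie_smul, smul_lie, map_smul, LinearMap.smul_apply, smul_add])
      (by intros; simp only [lie_add, map_add]; abel)
      (by intros; simp only [lie_smul, map_smul, smul_add]))
    (by
      intros; ext
      simp only [LinearMap.mk₂_apply, lie_add, add_lie, map_add, LinearMap.add_apply]; abel)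
    (by
      intros; ext
      simp only [LinearMap.mk₂_apply, lie_smul, smul_lie, map_smul, LinearMap.smul_apply, smul_add])
    (by
      intros; ext
      simp only [LinearMap.mk₂_apply, lie_add, add_lie, map_add, LinearMap.add_apply]; abel)
    (by
      intros; ext
      simp only [LinearMap.mk₂_apply, lie_smul, smul_lie, map_smul, LinearMap.smul_apply, smul_add])

variable {σ : L →ₗ[R] L →ₗ[R] M}

@[simp]
theorem lambdaForm_apply (x y z w : L) :
    lambdaForm σ x y z w = σ ⁅x, y⁆ ⁅z, w⁆ + σ ⁅y, z⁆ ⁅x, w⁆ + σ ⁅z, x⁆ ⁅y, w⁆ :=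
  rfl

theorem lambdaForm_eq_zero_iff :
    lambdaForm σ = 0 ↔ ∀ x y z w : L, σ ⁅x, y⁆ ⁅z, w⁆ + σ ⁅y, z⁆ ⁅x, w⁆ + σ ⁅z, x⁆ ⁅y, w⁆ = 0 := by
  simp only [LinearMap.ext_iff, lambdaForm_apply, LinearMap.zero_apply]

theorem apply_eq_zero_of_lambdaForm_eq_zero (hσ : lambdaForm σ = 0) {I J : LieIdeal R L}
    (hIJ : Disjoint I J) (hI : ⁅I, I⁆ = I) (hJ : ⁅J, J⁆ = J) {x y : L} (hx : x ∈ I)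
    (hy : y ∈ J) : σ x y = 0 := by
  have hlie : ∀ a ∈ I, ∀ b ∈ I, ∀ c ∈ J, ∀ d, σ ⁅a, b⁆ ⁅c, d⁆ = 0 := fun a ha b hb c hc d => by
    simpa [LieIdeal.lie_eq_zero_of_disjoint hIJ hb hc,
      LieIdeal.lie_eq_zero_of_disjoint hIJ.symm hc ha] using congr($hσ a b c d)
  refine LieIdeal.map_eq_zero_of_lie_self_eq hI (σ.flip y) (fun a ha b hb => ?_) hx
  exact LieIdeal.map_eq_zero_of_lie_self_eq hJ (σ ⁅a, b⁆)
    (fun c hc d _ => hlie a ha b hb c hc d) hy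

open Function in
theorem lambdaForm_eq_zero_of_iSup_eq_top {ι : Type*} {I : ι → LieIdeal R L}
    (hdisj : Pairwise (Disjoint on I)) (htop : ⨆ i, I i = ⊤)
    (horth : ∀ i j, i ≠ j → ∀ x ∈ I i, ∀ y ∈ I j, σ x y = 0)
    (hdiag : ∀ i, ∀ x ∈ I i, ∀ y ∈ I i, ∀ z ∈ I i, ∀ w ∈ I i, lambdaForm σ x y z w = 0) :
    lambdaForm σ = 0 := by
  have hlie : ∀ {i j k l a b c d}, a ∈ I i → b ∈ I j → c ∈ I k → d ∈ I l →
      ¬(i = j ∧ j = k ∧ k = l) → σ ⁅a, b⁆ ⁅c, d⁆ = 0 := by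
    intro i j k l a b c d ha hb hc hd hne
    by_cases hij : i = j
    · subst hij
      by_cases hkl : k = l
      · subst hkl
        exact horth i k (fun h => hne ⟨rfl, h, rfl⟩) _ (lie_mem_left R L (I i) a b ha) _
          (lie_mem_left R L (I k) c d hc)
      · rw [LieIdeal.lie_eq_zero_of_disjoint (hdisj hkl) hc hd, map_zero]
    · rw [LieIdeal.lie_eq_zero_of_disjoint (hdisj hij) ha hb, map_zero, LinearMap.zero_apply]
  have htop' : ⨆ i, (I i : Submodule R L) = ⊤ := LieSubmodule.iSup_toSubmodule_eq_top.mpr htop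
  refine LinearMap.eq_zero_of_iSup_eq_top htop' fun i x hx => ?_
  refine LinearMap.eq_zero_of_iSup_eq_top htop' fun j y hy => ?_
  refine LinearMap.eq_zero_of_iSup_eq_top htop' fun k z hz => ?_
  refine LinearMap.eq_zero_of_iSup_eq_top htop' fun l w hw => ?_
  by_cases h : i = j ∧ j = k ∧ k = l
  · obtain ⟨rfl, rfl, rfl⟩ := h
    exact hdiag i x hx y hy z hz w hw
  · rw [lambdaForm_apply, hlie hx hy hz hw h, hlie hy hz hx hw (by grind),
      hlie hz hx hy hw (by grind)]
    simp

end LieAlgebra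

theorem ker_lambda_direct_sum_decomposition_general
    {𝕜 : Type*} [RCLike 𝕜] {L : Type*} [LieRing L] [LieAlgebra 𝕜 L]
    {s : ℕ} (I : Fin s → LieIdeal 𝕜 L)
    (hsimple : ∀ i, LieAlgebra.IsSimple 𝕜 (I i))
    (hinternal : DirectSum.IsInternal fun i => ((I i : LieSubmodule 𝕜 L L) : Submodule 𝕜 L))
    (σ : L →ₗ[𝕜] L →ₗ[𝕜] 𝕜) :
    (∀ x y z w : L, σ ⁅x, y⁆ ⁅z, w⁆ + σ ⁅y, z⁆ ⁅x, w⁆ + σ ⁅z, x⁆ ⁅y, w⁆ = 0) ↔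
      ((∀ i j, i ≠ j → ∀ x ∈ I i, ∀ y ∈ I j, σ x y = 0) ∧
       (∀ i, ∀ x ∈ I i, ∀ y ∈ I i, ∀ z ∈ I i, ∀ w ∈ I i,
          σ ⁅x, y⁆ ⁅z, w⁆ + σ ⁅y, z⁆ ⁅x, w⁆ + σ ⁅z, x⁆ ⁅y, w⁆ = 0)) := by
  have hdisj : Pairwise fun i j => Disjoint (I i) (I j) := fun i j hij =>
    LieSubmodule.disjoint_toSubmodule.mp (hinternal.submodule_iSupIndep.pairwiseDisjoint hij)
  have hperfect : ∀ i, ⁅I i, I i⁆ = I i := fun i =>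
    have := hsimple i
    (I i).lie_self_eq_of_isSimple
  constructor
  · intro h
    refine ⟨fun i j hij x hx y hy => ?_, fun i x _ y _ z _ w _ => h x y z w⟩
    exact LieAlgebra.apply_eq_zero_of_lambdaForm_eq_zero (LieAlgebra.lambdaForm_eq_zero_iff.mpr h)
      (hdisj hij) (hperfect i) (hperfect j) hx hy
  · rintro ⟨horth, hdiag⟩
    refine LieAlgebra.lambdaForm_eq_zero_iff.mp
      (LieAlgebra.lambdaForm_eq_zero_of_iSup_eq_top hdisj ?_ horth hdiag)
    exact LieSubmodule.iSup_toSubmodule_eq_top.mp hinternal.submodule_iSup_eq_top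

/-- Let `g = g₁ ⊕ ⋯ ⊕ g_s` be a decomposition of a semisimple Lie algebra
over `ℝ` or `ℂ` into simple ideals.  A symmetric bilinear form `σ` satisfies `Λσ = 0`
iff distinct summands are `σ`-orthogonal and the restriction of `σ` to each summand
lies in the kernel of the corresponding operator `Λᵢ`; in particular, `Ker Λ` is the
direct sum of the kernels of the `Λᵢ` (extended trivially). -/
theorem ker_lambda_direct_sum_decomposition
    {𝕜 : Type*} [RCLike 𝕜] {L : Type*} [LieRing L] [LieAlgebra 𝕜 L]
    [Module.Finite 𝕜 L] [LieAlgebra.IsSemisimple 𝕜 L]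
    {s : ℕ} (I : Fin s → LieIdeal 𝕜 L)
    (hsimple : ∀ i, LieAlgebra.IsSimple 𝕜 (I i))
    (hinternal : DirectSum.IsInternal fun i => ((I i : LieSubmodule 𝕜 L L) : Submodule 𝕜 L))
    (σ : L →ₗ[𝕜] L →ₗ[𝕜] 𝕜) (hσ : ∀ x y : L, σ x y = σ y x) :
    (∀ x y z w : L, σ ⁅x, y⁆ ⁅z, w⁆ + σ ⁅y, z⁆ ⁅x, w⁆ + σ ⁅z, x⁆ ⁅y, w⁆ = 0) ↔
      ((∀ i j, i ≠ j → ∀ x ∈ I i, ∀ y ∈ I j, σ x y = 0) ∧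
       (∀ i, ∀ x ∈ I i, ∀ y ∈ I i, ∀ z ∈ I i, ∀ w ∈ I i,
          σ ⁅x, y⁆ ⁅z, w⁆ + σ ⁅y, z⁆ ⁅x, w⁆ + σ ⁅z, x⁆ ⁅y, w⁆ = 0)) :=
  ker_lambda_direct_sum_decomposition_general I hsimple hinternal σ
end

section
/- Let g be the underlying real space of a finite-dimensional complex vector space with complex structure J, and β^h a nondegenerate symmetric ℂ-bilinear form. Let P be the 2-dimensional real span of β = 2 Re β^h and γ = 2 Im β^h. Then the pair (g, P) determines (J, β^h) uniquely up to replacement by (J, a·β^h) or (−J, a·conj(β^h)) with a ∈ ℂ \ {0}. In particular, ±J is recoverable from P: for any basis κ = β, λ = uβ + vγ (v ≠ 0) of P, the endomorphism with components κ^{pr}λ_{rq} equals u·Id − v·J, so J is the normalized traceless part. -/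
/-- Let `V` be a finite-dimensional real vector space with a complex
structure `J` and a nondegenerate symmetric bilinear form `b` which is `ℂ`-bilinear with
respect to `J`.  The real span `P` of `2 Re b` and `2 Im b` determines the pair `(J, b)`
uniquely up to replacement by `(J, a·b)` or `(−J, a·conj b)` with `a ∈ ℂ \ {0}`. -/
theorem plane_determines_complex_structure_and_form
    {V : Type*} [AddCommGroup V] [Module ℝ V] [FiniteDimensional ℝ V]
    (J : V →ₗ[ℝ] V) (hJ : J ∘ₗ J = -LinearMap.id)
    (b : V →ₗ[ℝ] V →ₗ[ℝ] ℂ)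
    (hbJl : ∀ x y : V, b (J x) y = Complex.I * b x y)
    (hbJr : ∀ x y : V, b x (J y) = Complex.I * b x y)
    (hbsymm : ∀ x y : V, b x y = b y x)
    (hbnd : ∀ x : V, (∀ y : V, b x y = 0) → x = 0)
    (J' : V →ₗ[ℝ] V) (hJ' : J' ∘ₗ J' = -LinearMap.id)
    (b' : V →ₗ[ℝ] V →ₗ[ℝ] ℂ)
    (hbJl' : ∀ x y : V, b' (J' x) y = Complex.I * b' x y)
    (hbJr' : ∀ x y : V, b' x (J' y) = Complex.I * b' x y)
    (hbsymm' : ∀ x y : V, b' x y = b' y x)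
    (hbnd' : ∀ x : V, (∀ y : V, b' x y = 0) → x = 0)
    (hP : Submodule.span ℝ
        ({fun x y => 2 * (b x y).re, fun x y => 2 * (b x y).im} : Set (V → V → ℝ)) =
      Submodule.span ℝ
        ({fun x y => 2 * (b' x y).re, fun x y => 2 * (b' x y).im} : Set (V → V → ℝ))) :
    (J' = J ∧ ∃ a : ℂ, a ≠ 0 ∧ ∀ x y : V, b' x y = a * b x y) ∨
    (J' = -J ∧ ∃ a : ℂ, a ≠ 0 ∧ ∀ x y : V, b' x y = a * (starRingEnd ℂ) (b x y)) := by
  classical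
  -- membership of Re b', Im b' in the span of Re b, Im b
  have hmem1 : (fun x y => 2 * (b' x y).re) ∈ Submodule.span ℝ
      ({fun x y => 2 * (b x y).re, fun x y => 2 * (b x y).im} : Set (V → V → ℝ)) := by
    rw [hP]; exact Submodule.subset_span (Set.mem_insert _ _)
  have hmem2 : (fun x y => 2 * (b' x y).im) ∈ Submodule.span ℝ
      ({fun x y => 2 * (b x y).re, fun x y => 2 * (b x y).im} : Set (V → V → ℝ)) := by
    rw [hP]; exact Submodule.subset_span (Set.mem_insert_of_mem _ rfl)
  obtain ⟨p, q, hpq⟩ := Submodule.mem_span_pair.mp hmem1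
  obtain ⟨r, s, hrs⟩ := Submodule.mem_span_pair.mp hmem2
  have hre : ∀ x y : V, (b' x y).re = p * (b x y).re + q * (b x y).im := by
    intro x y
    have h := congrFun (congrFun hpq x) y
    simp only [Pi.add_apply, Pi.smul_apply, smul_eq_mul] at h
    linarith
  have him : ∀ x y : V, (b' x y).im = r * (b x y).re + s * (b x y).im := by
    intro x y
    have h := congrFun (congrFun hrs x) y
    simp only [Pi.add_apply, Pi.smul_apply, smul_eq_mul] at h
    linarith
  set c : ℂ := ⟨(p + s) / 2, (r - q) / 2⟩ with hc_def
  set d : ℂ := ⟨(p - s) / 2, (r + q) / 2⟩ with hd_def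
  have hcd : ∀ x y : V, b' x y = c * b x y + d * (starRingEnd ℂ) (b x y) := by
    intro x y
    apply Complex.ext <;>
      simp only [Complex.add_re, Complex.add_im, Complex.mul_re, Complex.mul_im,
        Complex.conj_re, Complex.conj_im, hc_def, hd_def, hre x y, him x y] <;>
      try ring
  -- key identities
  have hconj : ∀ z : ℂ, (starRingEnd ℂ) (Complex.I * z) = -Complex.I * (starRingEnd ℂ) z := by
    intro z; rw [map_mul, Complex.conj_I]
  have key : ∀ x y : V,
      c * b (J' x) y = c * (Complex.I * b x y) ∧
      (starRingEnd ℂ) d * b (J' x) y = (starRingEnd ℂ) d * (-Complex.I * b x y) := by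
    intro x y
    have E1 := hbJl' x y
    rw [hcd, hcd] at E1
    have E2 := hbJl' x (J y)
    rw [hcd, hcd, hbJr, hbJr, hconj, hconj] at E2
    constructor
    · linear_combination E1 / 2 - Complex.I / 2 * E2 +
        ((c * b (J' x) y - d * (starRingEnd ℂ) (b (J' x) y) - Complex.I * c * b x y +
          Complex.I * d * (starRingEnd ℂ) (b x y)) / 2) * Complex.I_sq
    · have hdu : d * (starRingEnd ℂ) (b (J' x) y)
          = d * (Complex.I * (starRingEnd ℂ) (b x y)) := by
        linear_combination E1 / 2 + Complex.I / 2 * E2 +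
          ((d * (starRingEnd ℂ) (b (J' x) y) - c * b (J' x) y + Complex.I * c * b x y -
            Complex.I * d * (starRingEnd ℂ) (b x y)) / 2) * Complex.I_sq
      have := congrArg (starRingEnd ℂ) hdu
      simp only [map_mul, Complex.conj_I, Complex.conj_conj] at this
      linear_combination this
  -- the trivial case helper
  have htriv : (∀ x : V, x = 0) →
      (J' = J ∧ ∃ a : ℂ, a ≠ 0 ∧ ∀ x y : V, b' x y = a * b x y) ∨
      (J' = -J ∧ ∃ a : ℂ, a ≠ 0 ∧ ∀ x y : V, b' x y = a * (starRingEnd ℂ) (b x y)) := by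
    intro hz
    left
    refine ⟨by ext x; rw [hz x]; simp, 1, one_ne_zero, fun x y => by rw [hz x]; simp⟩
  by_cases hd : d = 0
  · by_cases hc : c = 0
    · -- b' = 0, so V is trivial
      refine htriv fun x => hbnd' x fun y => ?_
      rw [hcd]; simp [hc, hd]
    · -- J' = J, b' = c • b
      left
      have hJ'x : ∀ x y : V, b (J' x) y = Complex.I * b x y := fun x y =>
        mul_left_cancel₀ hc (key x y).1
      have hJJ : J' = J := by
        ext x
        have h0 : ∀ y : V, b (J' x - J x) y = 0 := by
          intro y
          rw [map_sub, LinearMap.sub_apply, hJ'x, hbJl]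
          ring
        exact sub_eq_zero.mp (hbnd _ h0)
      exact ⟨hJJ, c, hc, fun x y => by rw [hcd]; simp [hd]⟩
  · by_cases hc : c = 0
    · -- J' = -J, b' = d • conj b
      right
      have hd' : (starRingEnd ℂ) d ≠ 0 := by simpa using hd
      have hJ'x : ∀ x y : V, b (J' x) y = -Complex.I * b x y := fun x y =>
        mul_left_cancel₀ hd' (key x y).2
      have hJJ : J' = -J := by
        ext x
        have h0 : ∀ y : V, b (J' x + J x) y = 0 := by
          intro y
          rw [map_add, LinearMap.add_apply, hJ'x, hbJl]
          ring
        have := hbnd _ h0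
        have : J' x = -J x := by
          rw [eq_neg_iff_add_eq_zero]; exact this
        simpa using this
      exact ⟨hJJ, d, hd, fun x y => by rw [hcd]; simp [hc]⟩
    · -- both nonzero: b vanishes, V trivial
      have hd' : (starRingEnd ℂ) d ≠ 0 := by simpa using hd
      have hb0 : ∀ x y : V, b x y = 0 := by
        intro x y
        have h1 := mul_left_cancel₀ hc (key x y).1
        have h2 := mul_left_cancel₀ hd' (key x y).2
        linear_combination Complex.I / 2 * h1 - Complex.I / 2 * h2 + b x y * Complex.I_sq
      exact htriv fun x => hbnd x (hb0 x)
end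

section
/- Let g be a complex simple Lie algebra isomorphic to sl(2,ℂ). Viewed as a 6-dimensional real Lie algebra, the kernel of the operator Λ on real symmetric bilinear forms, (Λσ)(x,y,z,z') = σ([x,y],[z,z']) + σ([y,z],[x,z']) + σ([z,x],[y,z']), has real dimension 12 and consists exactly of the real parts of all symmetric ℂ-bilinear forms on g. -/
/-!
Substituting `i • y` and `i • w` into `Λ B = 0` and subtracting gives
`D [x,y] [z,w] + D [y,z] [x,w] = 0` for `D u v = B (i • u) v - B u (i • v)`; cycling `x, y, z`
forces `D` to vanish on pairs of brackets, hence everywhere because `sl(2,ℂ)` is perfect. But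
`D = 0` says exactly that `B` is the real part of the `ℂ`-bilinear form `B x y - i B x (i • y)`,
which is symmetric with `B`. Conversely, for symmetric `ℂ`-bilinear `σ` the complex `Λ σ` is an
alternating `4`-form on a `3`-dimensional space, so `Λ (Re σ) = Re (Λ σ) = 0`. As `σ ↦ Re σ` is
injective, the kernel has twice the complex dimension `(3 + 1).choose 2 = 6` of symmetric forms.
-/

open Module

def lambdaOp {R L : Type*} [CommRing R] [LieRing L] [Module R L] (B : L →ₗ[R] L →ₗ[R] R)
    (x y z w : L) : R :=
  B ⁅x, y⁆ ⁅z, w⁆ + B ⁅y, z⁆ ⁅x, w⁆ + B ⁅z, x⁆ ⁅y, w⁆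

section Alternating
variable {K L : Type*} [CommRing K] [LieRing L] [LieAlgebra K L]
  {σ : L →ₗ[K] L →ₗ[K] K}

lemma apply_lie_add_apply_lie_swap (x y u : L) : σ ⁅x, y⁆ u + σ ⁅y, x⁆ u = 0 := by
  rw [← lie_skew x y, map_neg, LinearMap.neg_apply, neg_add_cancel]

lemma lambdaOp_self₀₁ (x z w : L) : lambdaOp σ x x z w = 0 := by
  rw [lambdaOp, lie_self, map_zero, LinearMap.zero_apply, zero_add, add_comm]
  exact apply_lie_add_apply_lie_swap _ _ _

lemma lambdaOp_self₀₂ (x y w : L) : lambdaOp σ x y x w = 0 := by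
  rw [lambdaOp, lie_self, map_zero, LinearMap.zero_apply, add_zero]
  exact apply_lie_add_apply_lie_swap _ _ _

lemma lambdaOp_self₁₂ (x y w : L) : lambdaOp σ x y y w = 0 := by
  rw [lambdaOp, lie_self, map_zero, LinearMap.zero_apply, add_zero]
  exact apply_lie_add_apply_lie_swap _ _ _

variable (hσ : ∀ x y, σ x y = σ y x)
include hσ

lemma lambdaOp_self₀₃ (x y z : L) : lambdaOp σ x y z x = 0 := by
  simp only [lambdaOp, lie_self, map_zero, add_zero]
  rw [hσ ⁅z, x⁆]
  exact apply_lie_add_apply_lie_swap _ _ _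

lemma lambdaOp_self₁₃ (x y z : L) : lambdaOp σ x y z y = 0 := by
  simp only [lambdaOp, lie_self, map_zero, add_zero]
  rw [hσ ⁅x, y⁆]
  exact apply_lie_add_apply_lie_swap _ _ _

lemma lambdaOp_self₂₃ (x y z : L) : lambdaOp σ x y z z = 0 := by
  simp only [lambdaOp, lie_self, map_zero, zero_add]
  rw [hσ ⁅y, z⁆]
  exact apply_lie_add_apply_lie_swap _ _ _

def lambdaAlternating : L [⋀^Fin 4]→ₗ[K] K where
  toFun v := lambdaOp σ (v 0) (v 1) (v 2) (v 3)
  map_update_add' v i x y := by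
    -- the field is stated for an arbitrary `DecidableEq (Fin 4)`, which the kernel cannot
    -- evaluate when `simp` decides index equalities
    obtain rfl : ‹DecidableEq (Fin 4)› = instDecidableEqFin 4 := Subsingleton.elim _ _
    fin_cases i <;> simp [lambdaOp, add_lie, lie_add] <;> ring
  map_update_smul' v i c x := by
    obtain rfl : ‹DecidableEq (Fin 4)› = instDecidableEqFin 4 := Subsingleton.elim _ _
    fin_cases i <;> simp [lambdaOp, smul_lie, lie_smul] <;> ring
  map_eq_zero_of_eq' v i j hv hij := by
    fin_cases i <;> fin_cases j <;>
      simp only [Fin.zero_eta, Fin.mk_one, Fin.reduceFinMk] at hv hij ⊢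
    all_goals first
      | exact (hij rfl).elim
      | rw [hv]
        first
        | exact lambdaOp_self₀₁ _ _ _
        | exact lambdaOp_self₀₂ _ _ _
        | exact lambdaOp_self₁₂ _ _ _
        | exact lambdaOp_self₀₃ hσ _ _ _
        | exact lambdaOp_self₁₃ hσ _ _ _
        | exact lambdaOp_self₂₃ hσ _ _ _

end Alternating

lemma lambdaOp_eq_zero_of_finrank_le_three {K L : Type*} [Field K] [LieRing L] [LieAlgebra K L]
    [FiniteDimensional K L] (hL : finrank K L ≤ 3) {σ : L →ₗ[K] L →ₗ[K] K}
    (hσ : ∀ x y, σ x y = σ y x) (x y z w : L) : lambdaOp σ x y z w = 0 :=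
  (lambdaAlternating hσ).map_linearDependent ![x, y, z, w] fun h => by
    simpa using h.fintype_card_le_finrank.trans hL

section SymmetricForms
variable (K : Type*) [Field K]

def symmMatrices (n : Type*) : Submodule K (Matrix n n K) where
  carrier := {A | A.IsSymm}
  add_mem' := Matrix.IsSymm.add
  zero_mem' := Matrix.isSymm_zero
  smul_mem' c _ hA := hA.smul c

def symmMatricesEquivSym2 (n : Type*) : symmMatrices K n ≃ₗ[K] (Sym2 n → K) where
  toFun A := Sym2.lift ⟨fun i j => A.1 i j, fun i j => (A.2.apply i j).symm⟩
  map_add' _ _ := funext fun z => Sym2.ind (fun _ _ => rfl) z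
  map_smul' _ _ := funext fun z => Sym2.ind (fun _ _ => rfl) z
  invFun f :=
    ⟨Matrix.of fun i j => f s(i, j), Matrix.IsSymm.ext fun i j => by simp [Sym2.eq_swap]⟩
  left_inv _ := rfl
  right_inv f := funext fun z => Sym2.ind (fun _ _ => rfl) z

lemma finrank_symmMatrices (n : Type*) [Fintype n] [DecidableEq n] :
    finrank K (symmMatrices K n) = (Fintype.card n + 1).choose 2 := by
  rw [(symmMatricesEquivSym2 K n).finrank_eq, finrank_fintype_fun_eq_card, Sym2.card]

variable (V : Type*) [AddCommGroup V] [Module K V]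

def symmBilinForms : Submodule K (LinearMap.BilinForm K V) where
  carrier := {B | ∀ x y, B x y = B y x}
  add_mem' hB hC x y := by simp [hB x y, hC x y]
  zero_mem' _ _ := rfl
  smul_mem' c _ hB x y := by simp [hB x y]

variable {K V} in
lemma mem_symmBilinForms {B : LinearMap.BilinForm K V} :
    B ∈ symmBilinForms K V ↔ ∀ x y, B x y = B y x := Iff.rfl

lemma finrank_symmBilinForms [FiniteDimensional K V] :
    finrank K (symmBilinForms K V) = (finrank K V + 1).choose 2 := by
  let b := Module.finBasis K V
  have hmap : (symmBilinForms K V).map (LinearMap.BilinForm.toMatrix b).toLinearMap =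
      symmMatrices K _ := by
    ext A
    rw [Submodule.map_equiv_eq_comap_symm, LinearMap.BilinForm.toMatrix_symm,
      Submodule.mem_comap, mem_symmBilinForms, ← LinearMap.BilinForm.isSymm_def]
    exact Matrix.isSymm_toBilin_iff_isSymm b
  rw [← LinearEquiv.finrank_map_eq (LinearMap.BilinForm.toMatrix b), hmap, finrank_symmMatrices,
    Fintype.card_fin]

end SymmetricForms

namespace LieAlgebra.SpecialLinear
variable {K : Type*} [Field K]

lemma finrank_sl (n : Type*) [Fintype n] [DecidableEq n] [Nonempty n] :
    finrank K (sl n K) = Fintype.card n ^ 2 - 1 := by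
  have hsurj : Function.Surjective (Matrix.traceLinearMap n K K) := by
    intro a
    obtain ⟨i⟩ := ‹Nonempty n›
    exact ⟨Matrix.single i i a, Matrix.trace_single_eq_same _ _⟩
  have := LinearMap.finrank_range_add_finrank_ker (Matrix.traceLinearMap n K K)
  rw [LinearMap.range_eq_top.2 hsurj, finrank_top, finrank_self, Module.finrank_matrix,
    Module.finrank_self, mul_one] at this
  change finrank K (LinearMap.ker (Matrix.traceLinearMap n K K)) = _
  rw [sq]
  omega

lemma exists_eq_lie_add_lie_sl_two (h2 : (2 : K) ≠ 0) (X : sl (Fin 2) K) :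
    ∃ a b c d : sl (Fin 2) K, X = ⁅a, b⁆ + ⁅c, d⁆ := by
  have htr : X.1 1 1 = - X.1 0 0 := by
    have htr : Matrix.trace X.1 = 0 := X.2
    rw [Matrix.trace_fin_two] at htr
    linear_combination htr
  -- `⁅H, Y⁆` yields the off-diagonal part of `X`, and `⁅E, c F⁆ = c H` the diagonal part
  refine ⟨⟨!![1, 0; 0, -1], by simp [sl, Matrix.trace_fin_two]⟩,
    ⟨!![0, X.1 0 1 / 2; -(X.1 1 0 / 2), 0], by simp [sl, Matrix.trace_fin_two]⟩,
    ⟨!![0, 1; 0, 0], by simp [sl, Matrix.trace_fin_two]⟩,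
    ⟨!![0, 0; X.1 0 0, 0], by simp [sl, Matrix.trace_fin_two]⟩, ?_⟩
  ext i j
  fin_cases i <;> fin_cases j <;> simp [Ring.lie_def, htr] <;> field_simp <;> ring

lemma span_lie_eq_top_of_lieEquiv_sl_two (h2 : (2 : K) ≠ 0) {L : Type*} [LieRing L]
    [LieAlgebra K L] {R : Type*} [Semiring R] [Module R L] (f : L ≃ₗ⁅K⁆ sl (Fin 2) K) :
    Submodule.span R {m : L | ∃ x y : L, ⁅x, y⁆ = m} = ⊤ := by
  refine eq_top_iff.2 fun v _ => ?_
  obtain ⟨a, b, c, d, h⟩ := exists_eq_lie_add_lie_sl_two h2 (f v)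
  have hv : v = ⁅f.symm a, f.symm b⁆ + ⁅f.symm c, f.symm d⁆ := by
    rw [← LieEquiv.map_lie, ← LieEquiv.map_lie, ← map_add, ← h, LieEquiv.symm_apply_apply]
  rw [hv]
  exact add_mem (Submodule.subset_span ⟨_, _, rfl⟩) (Submodule.subset_span ⟨_, _, rfl⟩)

end LieAlgebra.SpecialLinear

section RealPart
open Complex

lemma finrank_restrictScalars_real {W : Type*} [AddCommGroup W] [Module ℂ W] [Module ℝ W]
    [IsScalarTower ℝ ℂ W] (p : Submodule ℂ W) :
    finrank ℝ (p.restrictScalars ℝ) = 2 * finrank ℂ p := by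
  rw [((Submodule.restrictScalarsEquiv ℝ ℂ W p).restrictScalars ℝ).finrank_eq,
    ← Module.finrank_mul_finrank ℝ ℂ p, Complex.finrank_real_complex]

variable {V : Type*} [AddCommGroup V] [Module ℂ V] [Module ℝ V] [IsScalarTower ℝ ℂ V]

noncomputable def reBilin : LinearMap.BilinForm ℂ V →ₗ[ℝ] LinearMap.BilinForm ℝ V where
  toFun σ := (σ.restrictScalars₁₂ ℝ ℝ).compr₂ reLm
  map_add' _ _ := by ext; simp
  map_smul' _ _ := by ext; simp

@[simp]
lemma reBilin_apply (σ : LinearMap.BilinForm ℂ V) (x y : V) : reBilin σ x y = (σ x y).re := rfl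

lemma reBilin_injective : Function.Injective (reBilin (V := V)) := by
  intro σ τ h
  ext x y
  apply Complex.ext
  · simpa using LinearMap.congr_fun₂ h x y
  · simpa using LinearMap.congr_fun₂ h x (I • y)

def bilinFormOfSymm {K : Type*} [Field K] [Module K V] (f : V → V →ₗ[K] K)
    (hf : ∀ x y, f x y = f y x) : LinearMap.BilinForm K V :=
  LinearMap.mk₂ K (fun x y => f x y) (fun x x' y => by rw [hf, map_add, hf x, hf x'])
    (fun c x y => by rw [hf, map_smul, hf]) (fun x => map_add (f x)) (fun c x => map_smul (f x) c)

lemma exists_reBilin_eq (B : LinearMap.BilinForm ℝ V) (hB : ∀ x y, B x y = B y x)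
    (hI : ∀ x y, B (I • x) y = B x (I • y)) : ∃ σ ∈ symmBilinForms ℂ V, reBilin σ = B := by
  let f : V → V →ₗ[ℂ] ℂ := fun x => Module.Dual.extendRCLike (B x)
  have hf : ∀ x y, f x y = f y x := by
    intro x y
    simp only [f, Module.Dual.extendRCLike_apply, RCLike.I_to_complex, hB y x, hB y (_ • x), hI]
  refine ⟨bilinFormOfSymm f hf, hf, ?_⟩
  ext x y
  simp [bilinFormOfSymm, f, ← RCLike.re_to_complex]

end RealPart

section Defect
open Complex
variable {L : Type*} [LieRing L] [LieAlgebra ℂ L] [Module ℝ L] [IsScalarTower ℝ ℂ L]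
  {B : LinearMap.BilinForm ℝ L}

def smulIDefect (B : LinearMap.BilinForm ℝ L) : LinearMap.BilinForm ℝ L :=
  B ∘ₗ (LinearMap.lsmul ℂ L I).restrictScalars ℝ -
    B.compl₂ ((LinearMap.lsmul ℂ L I).restrictScalars ℝ)

lemma smulIDefect_apply (x y : L) : smulIDefect B x y = B (I • x) y - B x (I • y) := rfl

lemma smulIDefect_lie_lie (hΛ : ∀ x y z w, lambdaOp B x y z w = 0) (x y z w : L) :
    smulIDefect B ⁅x, y⁆ ⁅z, w⁆ = 0 := by
  have hpair : ∀ x y z w : L,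
      smulIDefect B ⁅x, y⁆ ⁅z, w⁆ + smulIDefect B ⁅y, z⁆ ⁅x, w⁆ = 0 := by
    intro x y z w
    have h₁ := hΛ x (I • y) z w
    have h₂ := hΛ x y z (I • w)
    simp only [lambdaOp, lie_smul, smul_lie] at h₁ h₂
    simp only [smulIDefect_apply]
    linarith
  linarith [hpair x y z w, hpair y z x w, hpair z x y w]

lemma smulIDefect_eq_zero (hspan : Submodule.span ℝ {m : L | ∃ x y : L, ⁅x, y⁆ = m} = ⊤)
    (hΛ : ∀ x y z w, lambdaOp B x y z w = 0) : smulIDefect B = 0 := by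
  refine LinearMap.ext_on hspan ?_
  rintro _ ⟨x, y, rfl⟩
  refine LinearMap.ext_on hspan ?_
  rintro _ ⟨z, w, rfl⟩
  exact smulIDefect_lie_lie hΛ x y z w

lemma lambdaOp_reBilin (σ : LinearMap.BilinForm ℂ L) (x y z w : L) :
    lambdaOp (reBilin σ) x y z w = (lambdaOp σ x y z w).re := by
  simp [lambdaOp]

theorem isSymm_and_lambdaOp_eq_zero_iff_exists_reBilin [FiniteDimensional ℂ L]
    (hL : finrank ℂ L ≤ 3)
    (hspan : Submodule.span ℝ {m : L | ∃ x y : L, ⁅x, y⁆ = m} = ⊤)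
    (B : LinearMap.BilinForm ℝ L) :
    ((∀ x y, B x y = B y x) ∧ ∀ x y z w, lambdaOp B x y z w = 0) ↔
      ∃ σ ∈ symmBilinForms ℂ L, reBilin σ = B := by
  constructor
  · rintro ⟨hB, hΛ⟩
    refine exists_reBilin_eq B hB fun x y => ?_
    rw [← sub_eq_zero, ← smulIDefect_apply, smulIDefect_eq_zero hspan hΛ]
    rfl
  · rintro ⟨σ, hσ, rfl⟩
    refine ⟨fun x y => by simp [hσ x y], fun x y z w => ?_⟩
    rw [lambdaOp_reBilin, lambdaOp_eq_zero_of_finrank_le_three hL hσ, Complex.zero_re]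

end Defect

/-- Let `g` be a complex simple Lie algebra isomorphic to `sl(2,ℂ)`,
viewed as a 6-dimensional real Lie algebra.  The kernel of `Λ` on real symmetric
bilinear forms has real dimension 12 and consists exactly of the real parts of all
symmetric `ℂ`-bilinear forms on `g`. -/
theorem ker_lambda_sl2C_dim_twelve
    {L : Type*} [LieRing L] [LieAlgebra ℂ L] [Module ℝ L] [IsScalarTower ℝ ℂ L]
    (hiso : Nonempty (L ≃ₗ⁅ℂ⁆ LieAlgebra.SpecialLinear.sl (Fin 2) ℂ)) :
    Module.finrank ℝ ↥(Submodule.span ℝ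
      {B : L →ₗ[ℝ] L →ₗ[ℝ] ℝ | (∀ x y : L, B x y = B y x) ∧
        ∀ x y z w : L, B ⁅x, y⁆ ⁅z, w⁆ + B ⁅y, z⁆ ⁅x, w⁆ + B ⁅z, x⁆ ⁅y, w⁆ = 0}) = 12 ∧
    {B : L →ₗ[ℝ] L →ₗ[ℝ] ℝ | (∀ x y : L, B x y = B y x) ∧
        ∀ x y z w : L, B ⁅x, y⁆ ⁅z, w⁆ + B ⁅y, z⁆ ⁅x, w⁆ + B ⁅z, x⁆ ⁅y, w⁆ = 0} =
      {B : L →ₗ[ℝ] L →ₗ[ℝ] ℝ | ∃ σ : L →ₗ[ℂ] L →ₗ[ℂ] ℂ,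
        (∀ x y : L, σ x y = σ y x) ∧ ∀ x y : L, B x y = (σ x y).re} := by
  obtain ⟨f⟩ := hiso
  have hdim : finrank ℂ L = 3 := by
    rw [f.toLinearEquiv.finrank_eq, LieAlgebra.SpecialLinear.finrank_sl]
    rfl
  have : FiniteDimensional ℂ L := Module.finite_of_finrank_eq_succ hdim
  have hker : {B : L →ₗ[ℝ] L →ₗ[ℝ] ℝ | (∀ x y : L, B x y = B y x) ∧
      ∀ x y z w : L, B ⁅x, y⁆ ⁅z, w⁆ + B ⁅y, z⁆ ⁅x, w⁆ + B ⁅z, x⁆ ⁅y, w⁆ = 0} =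
      ((symmBilinForms ℂ L).restrictScalars ℝ).map reBilin := by
    ext B
    exact isSymm_and_lambdaOp_eq_zero_iff_exists_reBilin hdim.le
      (LieAlgebra.SpecialLinear.span_lie_eq_top_of_lieEquiv_sl_two two_ne_zero f) B
  rw [hker]
  refine ⟨?_, ?_⟩
  · rw [Submodule.span_eq, ← (Submodule.equivMapOfInjective _ reBilin_injective _).finrank_eq,
      finrank_restrictScalars_real, finrank_symmBilinForms, hdim]
    rfl
  · ext B
    simp [LinearMap.ext_iff₂, eq_comm, mem_symmBilinForms]
end
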